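/- If scores s : P → ℝ satisfy s(G) > 0 for all G in a set A with |A| ≤ K and s(G) = 0 for all G ∉ A, and after each of finitely many rounds of splitting retained groups and rescoring (with the same sign property relative to T*-intersection) the top-K groups are kept, then the final K singletons output by the iterated top-K selection include every element of T*, provided K ≥ |T*|. -/
import Mathlib


open Finset

/-- TracLLM correctness (Proposition 1): starting from the single group T, at
each round every multi-element group is split into two disjoint nonempty halves,
each candidate group G receives a score that is positive iff G ∩ Tstar ≠ ∅, and
the K highest-scoring candidates are kept. If K ≥ |Tstar| and the process
terminates with all kept groups singletons, every element of Tstar is among the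
final K singletons. -/
theorem tracllm_finds_carrier {α : Type*} [DecidableEq α]
    (T Tstar : Finset α) (hsub : Tstar ⊆ T) (hne : Tstar.Nonempty)
    (K : ℕ) (hK : Tstar.card ≤ K)
    (V : ℕ → Finset (Finset α))
    (part : ℕ → Finset α → Finset α × Finset α)
    (C : ℕ → Finset (Finset α))
    (s : ℕ → Finset α → ℝ)
    (N : ℕ)
    (hV0 : V 0 = {T})
    (hC : ∀ l, C l = (V l).biUnion (fun G =>
        if G.card ≤ 1 then {G} else {(part l G).1, (part l G).2}))
    (hpart_union : ∀ l, ∀ G ∈ V l, 2 ≤ G.card →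
        (part l G).1 ∪ (part l G).2 = G)
    (hpart_disj : ∀ l, ∀ G ∈ V l, 2 ≤ G.card →
        Disjoint (part l G).1 (part l G).2)
    (hpart_ne : ∀ l, ∀ G ∈ V l, 2 ≤ G.card →
        (part l G).1.Nonempty ∧ (part l G).2.Nonempty)
    (hsign : ∀ l, ∀ G ∈ C l, (0 < s l G ↔ (G ∩ Tstar).Nonempty))
    (hVsub : ∀ l, V (l + 1) ⊆ C l)
    (hVcard : ∀ l, (V (l + 1)).card = min K (C l).card)
    (htop : ∀ l, ∀ G ∈ V (l + 1), ∀ H ∈ C l \ V (l + 1), s l H ≤ s l G)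
    (hterm : ∀ G ∈ V N, G.card = 1) :
    ∀ x ∈ Tstar, ({x} : Finset α) ∈ V N := by
  classical
  -- invariant: groups of V l are pairwise disjoint, and Tstar is covered
  have key : ∀ l, (∀ G ∈ V l, ∀ H ∈ V l, G ≠ H → Disjoint G H) ∧
      (∀ x ∈ Tstar, ∃ G ∈ V l, x ∈ G) := by
    intro l
    induction l with
    | zero =>
      rw [hV0]
      refine ⟨?_, ?_⟩
      · intro G hG H hH hGH
        simp only [mem_singleton] at hG hH
        exact absurd (hG.trans hH.symm) hGH
      · intro x hx; exact ⟨T, mem_singleton_self T, hsub hx⟩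
    | succ l ih =>
      obtain ⟨hdisj, hcov⟩ := ih
      -- each candidate is contained in its parent
      have hmemC : ∀ X ∈ C l, ∃ G ∈ V l, X ⊆ G := by
        intro X hX
        rw [hC l] at hX
        obtain ⟨G, hG, hXG⟩ := mem_biUnion.mp hX
        refine ⟨G, hG, ?_⟩
        by_cases h1 : G.card ≤ 1
        · simp only [if_pos h1, mem_singleton] at hXG
          exact hXG ▸ subset_rfl
        · simp only [if_neg h1, mem_insert, mem_singleton] at hXG
          have h2 : 2 ≤ G.card := by omega
          have hu := hpart_union l G hG h2
          rcases hXG with h | h <;> rw [h] <;> intro a ha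
          · exact hu ▸ mem_union_left _ ha
          · exact hu ▸ mem_union_right _ ha
      -- candidates are pairwise disjoint
      have hCdisj : ∀ X ∈ C l, ∀ Y ∈ C l, X ≠ Y → Disjoint X Y := by
        intro X hX Y hY hXY
        rw [hC l] at hX hY
        obtain ⟨G1, hG1, hX1⟩ := mem_biUnion.mp hX
        obtain ⟨G2, hG2, hY1⟩ := mem_biUnion.mp hY
        by_cases hP : G1 = G2
        · subst hP
          by_cases h1 : G1.card ≤ 1
          · simp only [if_pos h1, mem_singleton] at hX1 hY1
            exact absurd (hX1.trans hY1.symm) hXY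
          · simp only [if_neg h1, mem_insert, mem_singleton] at hX1 hY1
            have h2 : 2 ≤ G1.card := by omega
            have hd := hpart_disj l G1 hG1 h2
            rcases hX1 with h | h <;> rcases hY1 with h' | h' <;>
              subst h <;> subst h'
            · exact absurd rfl hXY
            · exact hd
            · exact hd.symm
            · exact absurd rfl hXY
        · have hdp := hdisj G1 hG1 G2 hG2 hP
          have hXsub : X ⊆ G1 := by
            by_cases h1 : G1.card ≤ 1
            · simp only [if_pos h1, mem_singleton] at hX1; exact hX1 ▸ subset_rfl
            · simp only [if_neg h1, mem_insert, mem_singleton] at hX1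
              have h2 : 2 ≤ G1.card := by omega
              have hu := hpart_union l G1 hG1 h2
              rcases hX1 with h | h <;> rw [h] <;> intro a ha
              · exact hu ▸ mem_union_left _ ha
              · exact hu ▸ mem_union_right _ ha
          have hYsub : Y ⊆ G2 := by
            by_cases h1 : G2.card ≤ 1
            · simp only [if_pos h1, mem_singleton] at hY1; exact hY1 ▸ subset_rfl
            · simp only [if_neg h1, mem_insert, mem_singleton] at hY1
              have h2 : 2 ≤ G2.card := by omega
              have hu := hpart_union l G2 hG2 h2
              rcases hY1 with h | h <;> rw [h] <;> intro a ha
              · exact hu ▸ mem_union_left _ ha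
              · exact hu ▸ mem_union_right _ ha
          exact hdp.mono hXsub hYsub
      -- Tstar is covered by candidates
      have hcovC : ∀ x ∈ Tstar, ∃ X ∈ C l, x ∈ X := by
        intro x hx
        obtain ⟨G, hG, hxG⟩ := hcov x hx
        by_cases h1 : G.card ≤ 1
        · refine ⟨G, ?_, hxG⟩
          rw [hC l]; exact mem_biUnion.mpr ⟨G, hG, by simp [h1]⟩
        · have h2 : 2 ≤ G.card := by omega
          have hu := hpart_union l G hG h2
          rw [← hu] at hxG
          rcases mem_union.mp hxG with h | h
          · refine ⟨(part l G).1, ?_, h⟩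
            rw [hC l]; exact mem_biUnion.mpr ⟨G, hG, by simp [h1]⟩
          · refine ⟨(part l G).2, ?_, h⟩
            rw [hC l]; exact mem_biUnion.mpr ⟨G, hG, by simp [h1]⟩
      -- every candidate intersecting Tstar is kept
      have hkeep : ∀ X ∈ C l, (X ∩ Tstar).Nonempty → X ∈ V (l + 1) := by
        intro X hX hXT
        by_contra hXV
        have hpos : 0 < s l X := (hsign l X hX).mpr hXT
        have hlt : K < (C l).card := by
          by_contra h
          push_neg at h
          have hcc : (V (l + 1)).card = (C l).card := by
            rw [hVcard l]; omega
          have heqVC := eq_of_subset_of_card_le (hVsub l) (le_of_eq hcc.symm)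
          rw [← heqVC] at hX
          exact hXV hX
        have hVK : (V (l + 1)).card = K := by rw [hVcard l]; omega
        -- all kept groups intersect Tstar
        have hkeptT : ∀ H ∈ V (l + 1), (H ∩ Tstar).Nonempty := by
          intro H hH
          have hHC := hVsub l hH
          have : s l X ≤ s l H := htop l H hH X (mem_sdiff.mpr ⟨hX, hXV⟩)
          exact (hsign l H hHC).mp (lt_of_lt_of_le hpos this)
        -- injection from insert X (V (l+1)) into Tstar
        set S := insert X (V (l + 1)) with hS
        have hScard : S.card = K + 1 := by
          rw [hS, card_insert_of_notMem hXV, hVK]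
        have hSC : S ⊆ C l := by
          intro Y hY
          rcases mem_insert.mp hY with h | h
          · exact h ▸ hX
          · exact hVsub l h
        have hSint : ∀ Y ∈ S, (Y ∩ Tstar).Nonempty := by
          intro Y hY
          rcases mem_insert.mp hY with h | h
          · exact h ▸ hXT
          · exact hkeptT Y h
        have hinj : S.card ≤ Tstar.card := by
          apply card_le_card_of_injOn
            (f := fun Y => if h : (Y ∩ Tstar).Nonempty then h.choose else hne.choose)
          · intro Y hY
            have h := hSint Y hY
            simp only [dif_pos h]
            exact (mem_inter.mp h.choose_spec).2
          · intro Y1 hY1 Y2 hY2 heq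
            simp only [mem_coe] at hY1 hY2
            have h1 := hSint Y1 hY1
            have h2 := hSint Y2 hY2
            simp only [dif_pos h1, dif_pos h2] at heq
            by_contra hne12
            have hd := hCdisj Y1 (hSC hY1) Y2 (hSC hY2) hne12
            have m1 : h1.choose ∈ Y1 := (mem_inter.mp h1.choose_spec).1
            have m2 : h1.choose ∈ Y2 := heq ▸ (mem_inter.mp h2.choose_spec).1
            exact (Finset.disjoint_left.mp hd m1) m2
        omega
      refine ⟨?_, ?_⟩
      · intro G hG H hH hGH
        exact hCdisj G (hVsub l hG) H (hVsub l hH) hGH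
      · intro x hx
        obtain ⟨X, hX, hxX⟩ := hcovC x hx
        exact ⟨X, hkeep X hX ⟨x, mem_inter.mpr ⟨hxX, hx⟩⟩, hxX⟩
  intro x hx
  obtain ⟨G, hG, hxG⟩ := (key N).2 x hx
  obtain ⟨a, ha⟩ := card_eq_one.mp (hterm G hG)
  subst ha
  rw [mem_singleton] at hxG
  subst hxG
  exact hG
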